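/- Define g(x) = (x+1) log₂(x+1) − x log₂ x for x > 0 (with g(0) = 0). For fixed η ∈ [0,1] and N > 0, the function F(η₁) = g((η + (1−η)η₁)N) + g((η + (1−η)(1−η₁))N) − g((1−η)η₁ N) − g((1−η)(1−η₁)N) is convex in η₁ on (0,1). -/

import Mathlib

/-!
With `c = η N` and `a = (1 - η) N`, `Fobj η N t = (h (a t) + h (a (1 - t))) / log 2`, where
`h x = gNat (c + x) - gNat x` and `gNat` is `g` in nats. Since `gNat'' x = -1 / (x (x + 1))` is
increasing on `(0, ∞)`, `h'' x = gNat'' (c + x) - gNat'' x ≥ 0`, so `h` is convex on `[0, ∞)`,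
and `Fobj η N` is a sum of two compositions of `h` with affine maps.
-/

/-- Entropy of a thermal bosonic state with mean photon number x (in bits),
g(x) = (x+1)log₂(x+1) − x log₂ x. -/
noncomputable def g (x : ℝ) : ℝ := (x + 1) * Real.logb 2 (x + 1) - x * Real.logb 2 x

/-- The squashed-entanglement objective for the pure-loss channel with squashing
beamsplitter of transmissivity η₁. -/
noncomputable def Fobj (η N η₁ : ℝ) : ℝ :=
  g ((η + (1 - η) * η₁) * N) + g ((η + (1 - η) * (1 - η₁)) * N)
    - g ((1 - η) * η₁ * N) - g ((1 - η) * (1 - η₁) * N)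

open Real Set

noncomputable def gNat (x : ℝ) : ℝ := (x + 1) * log (x + 1) - x * log x

lemma g_eq_gNat_div (x : ℝ) : g x = gNat x / log 2 := by
  simp only [g, gNat, logb]
  ring

lemma continuous_gNat : Continuous gNat :=
  (continuous_mul_log.comp (continuous_add_const 1)).sub continuous_mul_log

lemma hasDerivAt_gNat {x : ℝ} (hx : 0 < x) :
    HasDerivAt gNat (log (x + 1) - log x) x := by
  have hshift := (hasDerivAt_mul_log (by linarith : x + 1 ≠ 0)).comp_add_const x 1
  exact (hshift.sub (hasDerivAt_mul_log hx.ne')).congr_deriv (by ring)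

lemma hasDerivAt_log_add_one_sub_log {x : ℝ} (hx : 0 < x) :
    HasDerivAt (fun y => log (y + 1) - log y) (-(x * (x + 1))⁻¹) x := by
  have hshift := (hasDerivAt_log (by linarith : x + 1 ≠ 0)).comp_add_const x 1
  exact (hshift.sub (hasDerivAt_log hx.ne')).congr_deriv (by field_simp; ring)

lemma convexOn_gNat_add_sub {c : ℝ} (hc : 0 ≤ c) :
    ConvexOn ℝ (Ici 0) (fun x => gNat (c + x) - gNat x) := by
  refine convexOn_of_hasDerivWithinAt2_nonneg (convex_Ici 0)
    ((continuous_gNat.comp (continuous_const_add c)).sub continuous_gNat).continuousOn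
    (f' := fun x => (log (c + x + 1) - log (c + x)) - (log (x + 1) - log x))
    (f'' := fun x => -((c + x) * (c + x + 1))⁻¹ + (x * (x + 1))⁻¹) ?_ ?_ ?_
    <;> rw [interior_Ici] <;> intro x (hx : 0 < x) <;> have hcx : 0 < c + x := by linarith
  · exact (((hasDerivAt_gNat hcx).comp_const_add c x).sub (hasDerivAt_gNat hx)).hasDerivWithinAt
  · exact (((hasDerivAt_log_add_one_sub_log hcx).comp_const_add c x).sub
      (hasDerivAt_log_add_one_sub_log hx)).hasDerivWithinAt.congr_deriv (by ring)
  · have : ((c + x) * (c + x + 1))⁻¹ ≤ (x * (x + 1))⁻¹ := by gcongr <;> linarith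
    linarith

lemma ConvexOn.comp_mul_add_comp_mul_one_sub {f : ℝ → ℝ} (hf : ConvexOn ℝ (Ici 0) f)
    {a : ℝ} (ha : 0 ≤ a) : ConvexOn ℝ (Icc 0 1) fun t => f (a * t) + f (a * (1 - t)) := by
  have hmaps : ∀ p q : ℝ, 0 ≤ p → 0 ≤ q →
      Icc (0 : ℝ) 1 ⊆ (AffineMap.lineMap p q : ℝ →ᵃ[ℝ] ℝ) ⁻¹' Ici 0 := by
    intro p q hp hq t ⟨ht0, ht1⟩
    simp only [mem_preimage, mem_Ici, AffineMap.lineMap_apply_ring]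
    have : 0 ≤ 1 - t := by linarith
    positivity
  have h₀ := (hf.comp_affineMap (AffineMap.lineMap 0 a)).subset (hmaps 0 a le_rfl ha)
    (convex_Icc 0 1)
  have h₁ := (hf.comp_affineMap (AffineMap.lineMap a 0)).subset (hmaps a 0 ha le_rfl)
    (convex_Icc 0 1)
  refine (h₀.add h₁).congr fun t _ => ?_
  simp only [Pi.add_apply, Function.comp_apply, AffineMap.lineMap_apply_ring]
  ring_nf

/-- **Convexity in η₁** of the bosonic squashed-entanglement bound. -/
theorem Fobj_convex (η N : ℝ) (hη : η ∈ Set.Icc (0 : ℝ) 1) (hN : 0 < N) :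
    ConvexOn ℝ (Set.Ioo (0 : ℝ) 1) (fun η₁ => Fobj η N η₁) := by
  obtain ⟨hη0, hη1⟩ := hη
  have hc : 0 ≤ η * N := by positivity
  have ha : 0 ≤ (1 - η) * N := mul_nonneg (by linarith) hN.le
  have hconv := (((convexOn_gNat_add_sub hc).comp_mul_add_comp_mul_one_sub ha).smul
    (inv_nonneg.2 (log_nonneg one_le_two))).subset Ioo_subset_Icc_self (convex_Ioo 0 1)
  refine hconv.congr fun t _ => ?_
  simp only [Fobj, g_eq_gNat_div, smul_eq_mul]
  ring_nf
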